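/- arXiv:1803.05878 — 4 statements merged into one kernel-verified Lean document; each statement's English description precedes it below -/
import Mathlib

section
/- The Laplace transform of a lognormal random variable X ~ lnN(μ,σ²), defined on the closed right half-plane by φ(z) = ∫₀^∞ e^{-zx} f(x;μ,σ) dx, extends analytically to ℂ \ (-∞,0] via the formula φ(z) = (2πσ²)^{-1/2} exp(-(μ + Log z)²/(2σ²)) · Φ(1, μ + Log z; σ), where Φ(1,w;σ) = ∫₀^∞ x^{-1} exp(-x - (ln x)²/(2σ²) + (w/σ²) ln x) dx and Log is the principal complex logarithm. That is, the right-hand side is holomorphic on ℂ \ (-∞,0] and agrees with φ(z) for Re(z) > 0. -/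
open MeasureTheory Complex Set

/-- The lognormal density. -/
noncomputable def lognormalDensity (μ σ : ℝ) (x : ℝ) : ℝ :=
  (Real.sqrt (2 * Real.pi) * σ * x)⁻¹ * Real.exp (-(Real.log x - μ)^2 / (2 * σ^2))

/-- Φ(1,w;σ) = ∫₀^∞ x⁻¹ exp(-x - (ln x)²/(2σ²) + (w/σ²) ln x) dx. -/
noncomputable def PhiOne (σ : ℝ) (w : ℂ) : ℂ :=
  ∫ x : ℝ in Ioi 0, (x : ℂ)⁻¹ *
    Complex.exp (-(x:ℂ) - (Real.log x)^2 / (2 * σ^2) + (w / (σ:ℂ)^2) * Real.log x)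

open Filter Topology

/-!
Under x = eᵗ the kernel of Φ(1, w; σ) becomes a Gaussian in t, so w ↦ Φ(1, w; σ) is the Mellin
transform at w/σ² of a function decaying faster than every power of x at 0 and at ∞; hence it is
entire, and the right-hand side is holomorphic wherever Log is. The Laplace transform of the
(integrable, nonnegative) lognormal density is holomorphic on Re z > 0. For real z = s > 0 the
substitution x ↦ s x and completing the square in ln x identify the two sides, and the identity
theorem extends the equality to the whole half-plane.
-/

lemma exp_neg_sq_log_sub_le_rpow {σ : ℝ} (hσ : σ ≠ 0) (c a : ℝ) {x : ℝ} (hx : 0 < x) :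
    Real.exp (-(Real.log x - c) ^ 2 / (2 * σ ^ 2))
      ≤ Real.exp (a * c + a ^ 2 * σ ^ 2 / 2) * x ^ (-a) := by
  rw [Real.rpow_def_of_pos hx, ← Real.exp_add, Real.exp_le_exp]
  have hsquare : -(Real.log x - c) ^ 2 / (2 * σ ^ 2)
      = -(Real.log x - c - a * σ ^ 2) ^ 2 / (2 * σ ^ 2)
        + (a * c + a ^ 2 * σ ^ 2 / 2 + Real.log x * -a) := by
    field_simp
    ring
  rw [hsquare, add_le_iff_nonpos_left]
  exact div_nonpos_of_nonpos_of_nonneg (neg_nonpos.2 (sq_nonneg _)) (by positivity)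

lemma isBigO_exp_neg_sq_log_sub_rpow {σ : ℝ} (hσ : σ ≠ 0) (c a : ℝ) {l : Filter ℝ}
    (hl : ∀ᶠ x in l, 0 < x) :
    (fun x => Real.exp (-(Real.log x - c) ^ 2 / (2 * σ ^ 2))) =O[l] (· ^ (-a)) :=
  Asymptotics.IsBigO.of_bound _ <| hl.mono fun x hx => by
    rw [Real.norm_of_nonneg (Real.exp_pos _).le, Real.norm_of_nonneg (Real.rpow_nonneg hx.le _)]
    exact exp_neg_sq_log_sub_le_rpow hσ c a hx

lemma phiOne_eq_mellin (σ : ℝ) (w : ℂ) :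
    PhiOne σ w = mellin (fun x : ℝ => cexp (-(x : ℂ) - (Real.log x : ℂ) ^ 2 / (2 * (σ : ℂ) ^ 2)))
      (w / (σ : ℂ) ^ 2) := by
  refine setIntegral_congr_fun measurableSet_Ioi fun x (hx : 0 < x) => ?_
  have hx' : (x : ℂ) ≠ 0 := ofReal_ne_zero.mpr hx.ne'
  rw [smul_eq_mul, cpow_sub _ _ hx', cpow_one, cpow_def_of_ne_zero hx', ← ofReal_log hx.le,
    Complex.exp_add, mul_comm (w / _)]
  field_simp

lemma norm_cexp_neg_sub_sq_log_le (σ : ℝ) {x : ℝ} (hx : 0 ≤ x) :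
    ‖cexp (-(x : ℂ) - (Real.log x : ℂ) ^ 2 / (2 * (σ : ℂ) ^ 2))‖
      ≤ Real.exp (-(Real.log x) ^ 2 / (2 * σ ^ 2)) := by
  rw [← ofReal_neg, ← ofReal_pow, ← ofReal_pow, ← ofReal_ofNat, ← ofReal_mul, ← ofReal_div,
    ← ofReal_sub, norm_exp_ofReal, Real.exp_le_exp, neg_div]
  linarith

lemma differentiable_phiOne {σ : ℝ} (hσ : σ ≠ 0) : Differentiable ℂ (PhiOne σ) := by
  set g : ℝ → ℂ := fun x => cexp (-(x : ℂ) - (Real.log x : ℂ) ^ 2 / (2 * (σ : ℂ) ^ 2))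
  have hg_isBigO (a : ℝ) {l : Filter ℝ} (hl : ∀ᶠ x in l, 0 < x) : g =O[l] (· ^ (-a)) :=
    (Asymptotics.IsBigO.of_bound 1 (hl.mono fun x hx => by
      rw [one_mul, Real.norm_of_nonneg (Real.exp_pos _).le]
      exact norm_cexp_neg_sub_sq_log_le σ hx.le)).trans
      (by simpa using isBigO_exp_neg_sq_log_sub_rpow hσ 0 a hl)
  have hg_loc : LocallyIntegrableOn g (Ioi 0) := ContinuousOn.locallyIntegrableOn
    (by fun_prop (disch := first | exact fun x hx => (mem_Ioi.mp hx).ne' | simp [hσ]))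
    measurableSet_Ioi
  have hmellin : Differentiable ℂ (mellin g) := fun s =>
    mellin_differentiableAt_of_isBigO_rpow hg_loc (hg_isBigO _ (eventually_gt_atTop 0))
      (lt_add_one s.re) (hg_isBigO _ self_mem_nhdsWithin) (sub_one_lt s.re)
  rw [funext (phiOne_eq_mellin σ)]
  exact hmellin.comp (differentiable_id.div_const _)

lemma lognormalDensity_nonneg (μ : ℝ) {σ x : ℝ} (hσ : 0 ≤ σ) (hx : 0 ≤ x) :
    0 ≤ lognormalDensity μ σ x := by
  unfold lognormalDensity
  positivity

lemma integrableOn_lognormalDensity (μ : ℝ) {σ : ℝ} (hσ : σ ≠ 0) :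
    IntegrableOn (lognormalDensity μ σ) (Ioi 0) := by
  have hf_loc : LocallyIntegrableOn (fun x => Real.exp (-(Real.log x - μ) ^ 2 / (2 * σ ^ 2)))
      (Ioi 0) :=
    ContinuousOn.locallyIntegrableOn
      (by fun_prop (disch := first | exact fun x hx => (mem_Ioi.mp hx).ne' | simp [hσ]))
      measurableSet_Ioi
  have hmellin := mellin_convergent_of_isBigO_scalar (s := 0) hf_loc
    (isBigO_exp_neg_sq_log_sub_rpow hσ μ 1 (eventually_gt_atTop 0)) zero_lt_one
    (isBigO_exp_neg_sq_log_sub_rpow hσ μ (-1) self_mem_nhdsWithin) neg_one_lt_zero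
  refine IntegrableOn.congr_fun (hmellin.const_mul (Real.sqrt (2 * Real.pi) * σ)⁻¹)
    (fun x _ => ?_) measurableSet_Ioi
  rw [zero_sub, Real.rpow_neg_one, lognormalDensity, mul_inv]
  ring

open ProbabilityTheory in
lemma differentiableOn_laplace_of_nonneg {f : ℝ → ℝ} (hf : IntegrableOn f (Ioi 0))
    (hf_nonneg : ∀ x ∈ Ioi 0, 0 ≤ f x) :
    DifferentiableOn ℂ (fun z : ℂ => ∫ x : ℝ in Ioi 0, cexp (-z * x) * f x) {z | 0 < z.re} := by
  set ν := (volume.restrict (Ioi 0)).withDensity fun x => ((f x).toNNReal : ENNReal)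
  have : IsFiniteMeasure ν := isFiniteMeasure_withDensity_ofReal hf.hasFiniteIntegral
  have hν_pos : ∀ᵐ x ∂ν, 0 < x :=
    withDensity_absolutelyContinuous _ _ (ae_restrict_mem measurableSet_Ioi)
  have hlaplace (z : ℂ) : ∫ x : ℝ in Ioi 0, cexp (-z * x) * f x = complexMGF id ν (-z) := by
    rw [complexMGF, integral_withDensity_eq_integral_smul₀ hf.aemeasurable.real_toNNReal]
    refine setIntegral_congr_fun measurableSet_Ioi fun x hx => ?_
    rw [NNReal.smul_def, Real.coe_toNNReal _ (hf_nonneg x hx), real_smul, mul_comm, id]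
  have hstrip : Iio 0 ⊆ interior (integrableExpSet id ν) :=
    interior_maximal (fun t (ht : t < 0) => (integrable_const 1).mono' (by fun_prop)
      (hν_pos.mono fun x hx => by
        rw [Real.norm_of_nonneg (Real.exp_pos _).le, id, Real.exp_le_one_iff]
        exact (mul_neg_of_neg_of_pos ht hx).le)) isOpen_Iio
  exact (differentiableOn_complexMGF.comp (differentiableOn_neg _) fun z (hz : 0 < z.re) =>
    hstrip (by simpa using hz)).congr fun z _ => hlaplace z

lemma DifferentiableOn.eqOn_of_eq_on_pos_real {E : Type*} [NormedAddCommGroup E]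
    [NormedSpace ℂ E] [CompleteSpace E] {f g : ℂ → E}
    (hf : DifferentiableOn ℂ f {z | 0 < z.re}) (hg : DifferentiableOn ℂ g {z | 0 < z.re})
    (hfg : ∀ s : ℝ, 0 < s → f s = g s) : EqOn f g {z | 0 < z.re} := by
  have hU : IsOpen {z : ℂ | 0 < z.re} := isOpen_lt continuous_const continuous_re
  have hreal : Tendsto ofReal (𝓝[≠] 1) (𝓝[≠] 1) := by
    have := continuous_ofReal.continuousWithinAt.tendsto_nhdsWithin (x := 1)
      (s := {1}ᶜ) (t := {1}ᶜ) fun s hs => by simpa using hs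
    rwa [ofReal_one] at this
  refine (hf.analyticOnNhd hU).eqOn_of_preconnected_of_frequently_eq (hg.analyticOnNhd hU)
    (convex_halfSpace_re_gt 0).isPreconnected (z₀ := 1) (by simp) (hreal.frequently ?_)
  exact (eventually_nhdsWithin_of_eventually_nhds (eventually_gt_nhds one_pos)).frequently.mono hfg

lemma lognormal_laplace_ofReal (μ : ℝ) {σ s : ℝ} (hσ : 0 < σ) (hs : 0 < s) :
    ((Real.sqrt (2 * Real.pi * σ^2) : ℂ))⁻¹ *
        Complex.exp (-(↑μ + Complex.log s)^2 / (2 * σ^2)) * PhiOne σ (↑μ + Complex.log s)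
      = ∫ x : ℝ in Ioi 0, Complex.exp (-s * x) * (lognormalDensity μ σ x : ℂ) := by
  rw [← ofReal_log hs.le]
  set w : ℂ := μ + Real.log s
  have hscale : PhiOne σ w = s * ∫ x : ℝ in Ioi 0, ((s * x : ℝ) : ℂ)⁻¹ *
      cexp (-((s * x : ℝ) : ℂ) - (Real.log (s * x) : ℂ) ^ 2 / (2 * σ ^ 2)
        + (w / (σ : ℂ) ^ 2) * Real.log (s * x)) := by
    rw [integral_comp_mul_left_Ioi (fun y : ℝ => (y : ℂ)⁻¹ * cexp (-(y : ℂ)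
      - (Real.log y : ℂ) ^ 2 / (2 * σ ^ 2) + (w / (σ : ℂ) ^ 2) * Real.log y)) 0 hs, mul_zero,
      real_smul, ofReal_inv, mul_inv_cancel_left₀ (ofReal_ne_zero.mpr hs.ne'), PhiOne]
  rw [hscale, mul_left_comm, ← integral_const_mul, ← integral_const_mul]
  refine setIntegral_congr_fun measurableSet_Ioi fun x (hx : 0 < x) => ?_
  have hexp : cexp (-w ^ 2 / (2 * σ ^ 2)) * cexp (-((s : ℂ) * x)
      - ((Real.log s : ℂ) + Real.log x) ^ 2 / (2 * σ ^ 2)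
        + (w / (σ : ℂ) ^ 2) * (Real.log s + Real.log x))
      = cexp (-s * x) * cexp (-(Real.log x - μ) ^ 2 / (2 * σ ^ 2)) := by
    rw [← Complex.exp_add, ← Complex.exp_add]
    congr 1
    field_simp
    ring
  simp only [lognormalDensity, Real.log_mul hs.ne' hx.ne', Real.sqrt_mul' _ (sq_nonneg σ),
    Real.sqrt_sq hσ.le]
  push_cast
  rw [mul_inv (s : ℂ), mul_left_comm, mul_assoc (s : ℂ)⁻¹,
    mul_inv_cancel_left₀ (ofReal_ne_zero.mpr hs.ne'), mul_inv _ (x : ℂ)]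
  linear_combination (↑√(2 * Real.pi) * ↑σ : ℂ)⁻¹ * (x : ℂ)⁻¹ * hexp

/-- The Laplace transform of a lognormal distribution extends analytically to
ℂ \ (-∞,0] via z ↦ (2πσ²)^{-1/2} exp(-(μ + Log z)²/(2σ²)) Φ(1, μ + Log z; σ):
this function is holomorphic on the slit plane and agrees with the Laplace
transform for Re(z) > 0. -/
theorem lognormal_laplace_analytic_continuation (μ σ : ℝ) (hσ : 0 < σ) :
    DifferentiableOn ℂ
      (fun z : ℂ => ((Real.sqrt (2 * Real.pi * σ^2) : ℂ))⁻¹ *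
        Complex.exp (-(↑μ + Complex.log z)^2 / (2 * σ^2)) *
        PhiOne σ (↑μ + Complex.log z))
      Complex.slitPlane ∧
    ∀ z : ℂ, 0 < z.re →
      ((Real.sqrt (2 * Real.pi * σ^2) : ℂ))⁻¹ *
        Complex.exp (-(↑μ + Complex.log z)^2 / (2 * σ^2)) *
        PhiOne σ (↑μ + Complex.log z)
      = ∫ x : ℝ in Ioi 0, Complex.exp (-z * x) * (lognormalDensity μ σ x : ℂ) := by
  have hholo : DifferentiableOn ℂ (fun z : ℂ => ((Real.sqrt (2 * Real.pi * σ^2) : ℂ))⁻¹ *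
      Complex.exp (-(↑μ + Complex.log z)^2 / (2 * σ^2)) * PhiOne σ (↑μ + Complex.log z))
      Complex.slitPlane := fun z hz => by
    have hw : DifferentiableAt ℂ (fun z => (μ : ℂ) + Complex.log z) z :=
      (differentiableAt_log hz).const_add _
    exact (((hw.pow 2).neg.div_const _).cexp.const_mul _ |>.mul
      ((differentiable_phiOne hσ.ne' _).comp z hw)).differentiableWithinAt
  refine ⟨hholo, fun z hz => ?_⟩
  have hlaplace := differentiableOn_laplace_of_nonneg (integrableOn_lognormalDensity μ hσ.ne')
    fun x hx => lognormalDensity_nonneg μ hσ.le (le_of_lt hx)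
  exact (hholo.mono fun w hw => Or.inl hw).eqOn_of_eq_on_pos_real hlaplace
    (fun s hs => lognormal_laplace_ofReal μ hσ hs) hz
end

section
/- For any k > 0 and z ∈ ℂ \ (-∞,0], the Mellin–Barnes integral (1/(2πi)) ∫_{k-i∞}^{k+i∞} Γ(s) exp(-(μ + Log z)s + (σ²/2)s²) ds converges absolutely, and for z real positive it equals the Laplace transform φ(z) = ∫₀^∞ e^{-zx} f(x;μ,σ) dx of the lognormal distribution. -/
open MeasureTheory Complex Set

/-- The integrand of the Mellin–Barnes integral along the line Re(s) = k. -/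
noncomputable def mellinBarnesIntegrand (μ σ k : ℝ) (z : ℂ) (t : ℝ) : ℂ :=
  Complex.Gamma (k + t * Complex.I) *
    Complex.exp (-(↑μ + Complex.log z) * (k + t * Complex.I)
      + (σ:ℂ)^2 / 2 * (k + t * Complex.I)^2)

lemma Complex.norm_Gamma_le_Gamma_re {s : ℂ} (hs : 0 < s.re) : ‖Gamma s‖ ≤ Real.Gamma s.re := by
  rw [Gamma_eq_integral hs, GammaIntegral, Real.Gamma_eq_integral hs]
  refine (norm_integral_le_integral_norm _).trans_eq <|
    setIntegral_congr_fun measurableSet_Ioi fun u hu => ?_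
  simp [norm_cpow_eq_rpow_re_of_pos hu, Complex.norm_exp]

lemma Complex.continuous_Gamma_vertical {k : ℝ} (hk : 0 < k) :
    Continuous fun t : ℝ => Gamma (k + t * I) := by
  refine continuous_iff_continuousAt.mpr fun t => ?_
  refine (differentiableAt_Gamma _ fun m hm => ?_).continuousAt.comp (by fun_prop)
  have := congrArg re hm
  simp only [add_re, ofReal_re, mul_re, I_re, mul_zero, ofReal_im, I_im, mul_one, sub_self,
    add_zero, neg_re, natCast_re] at this
  linarith [(m.cast_nonneg : (0 : ℝ) ≤ m)]

lemma quadratic_vertical_eq (σ k : ℝ) (a : ℂ) (t : ℝ) :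
    a * (k + t * I) + (σ : ℂ) ^ 2 / 2 * (k + t * I) ^ 2
      = -((σ : ℂ) ^ 2 / 2) * t ^ 2 + ((σ ^ 2 * k + a) * I) * t + (a * k + σ ^ 2 / 2 * k ^ 2) := by
  linear_combination (σ : ℂ) ^ 2 / 2 * (t : ℂ) ^ 2 * I_sq

lemma integrable_cexp_quadratic_vertical {σ : ℝ} (hσ : 0 < σ) (k : ℝ) (a : ℂ) :
    Integrable fun t : ℝ => cexp (a * (k + t * I) + (σ : ℂ) ^ 2 / 2 * (k + t * I) ^ 2) := by
  have hb : 0 < ((σ : ℂ) ^ 2 / 2).re := by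
    simp only [← ofReal_pow, div_ofNat_re, ofReal_re]
    positivity
  simpa only [quadratic_vertical_eq] using integrable_cexp_quadratic hb _ _

lemma integral_cexp_quadratic_vertical {σ : ℝ} (hσ : 0 < σ) (k w : ℝ) :
    ∫ t : ℝ, cexp (w * (k + t * I) + (σ : ℂ) ^ 2 / 2 * (k + t * I) ^ 2)
      = ↑(Real.sqrt (2 * Real.pi) / σ * Real.exp (-w ^ 2 / (2 * σ ^ 2))) := by
  have hb : (-((σ : ℂ) ^ 2 / 2)).re < 0 := by
    simp only [← ofReal_pow, neg_re, div_ofNat_re, ofReal_re]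
    nlinarith
  simp only [quadratic_vertical_eq σ k]
  rw [integral_cexp_quadratic hb, ofReal_mul, ofReal_exp]
  congr 1
  · rw [neg_neg, show (Real.pi : ℂ) / ((σ : ℂ) ^ 2 / 2) = ((2 * Real.pi / σ ^ 2 : ℝ) : ℂ) by
      push_cast; ring, show (1 / 2 : ℂ) = ((1 / 2 : ℝ) : ℂ) by norm_num,
      ← ofReal_cpow (by positivity), ← Real.sqrt_eq_rpow, Real.sqrt_div' _ (sq_nonneg σ),
      Real.sqrt_sq hσ.le]
  · have hσ' : (σ : ℂ) ≠ 0 := ofReal_ne_zero.mpr hσ.ne'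
    rw [mul_pow, I_sq]
    push_cast
    congr 1
    field_simp
    ring

lemma integral_cpow_mul_cexp_quadratic_vertical {σ : ℝ} (hσ : 0 < σ) (c k : ℝ) {u : ℝ}
    (hu : 0 < u) :
    ∫ t : ℝ, (u : ℂ) ^ (k + t * I - 1) * cexp (-c * (k + t * I) + (σ : ℂ) ^ 2 / 2 * (k + t * I) ^ 2)
      = 2 * Real.pi * lognormalDensity c σ u := by
  have hu' : (u : ℂ) ≠ 0 := ofReal_ne_zero.mpr hu.ne'
  have hcpow (t : ℝ) :
      (u : ℂ) ^ (k + t * I - 1) * cexp (-c * (k + t * I) + (σ : ℂ) ^ 2 / 2 * (k + t * I) ^ 2)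
        = (u : ℂ)⁻¹ * cexp (((Real.log u - c : ℝ) : ℂ) * (k + t * I)
          + (σ : ℂ) ^ 2 / 2 * (k + t * I) ^ 2) := by
    rw [cpow_sub _ _ hu', cpow_one, cpow_def_of_ne_zero hu', ← ofReal_log hu.le, div_eq_inv_mul,
      mul_assoc, ← exp_add]
    push_cast
    congr 2
    ring
  have hsqrt : Real.sqrt (2 * Real.pi) ^ 2 = 2 * Real.pi := Real.sq_sqrt (by positivity)
  simp_rw [hcpow]
  rw [integral_const_mul, integral_cexp_quadratic_vertical hσ k, lognormalDensity]
  push_cast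
  field_simp
  rw [← ofReal_pow, hsqrt]
  push_cast
  ring

lemma integrable_mellinBarnesIntegrand {σ k : ℝ} (hσ : 0 < σ) (hk : 0 < k) (μ : ℝ) (z : ℂ) :
    Integrable (mellinBarnesIntegrand μ σ k z) := by
  have hs (t : ℝ) : 0 < (k + t * I).re := by simpa using hk
  refine ((integrable_cexp_quadratic_vertical hσ k (-(μ + log z))).norm.const_mul
    (Real.Gamma k)).mono' ((continuous_Gamma_vertical hk).mul (by fun_prop)).aestronglyMeasurable
    (.of_forall fun t => ?_)
  rw [mellinBarnesIntegrand, norm_mul]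
  gcongr
  simpa using norm_Gamma_le_Gamma_re (hs t)

lemma mellinBarnesIntegrand_eq_setIntegral (μ σ : ℝ) {k : ℝ} (hk : 0 < k) (z : ℂ) (t : ℝ) :
    mellinBarnesIntegrand μ σ k z t = ∫ u : ℝ in Ioi 0, ↑(Real.exp (-u)) * (u : ℂ) ^ (k + t * I - 1)
      * cexp (-(μ + log z) * (k + t * I) + (σ : ℂ) ^ 2 / 2 * (k + t * I) ^ 2) := by
  rw [mellinBarnesIntegrand, Gamma_eq_integral (by simpa using hk), GammaIntegral,
    integral_mul_const]

lemma integrable_gammaIntegrand_mul_cexp_quadratic_vertical {σ k : ℝ} (hσ : 0 < σ) (hk : 0 < k)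
    (a : ℂ) :
    Integrable (Function.uncurry fun t u : ℝ =>
        ↑(Real.exp (-u)) * (u : ℂ) ^ (k + t * I - 1)
          * cexp (a * (k + t * I) + (σ : ℂ) ^ 2 / 2 * (k + t * I) ^ 2))
      (volume.prod (volume.restrict (Ioi 0))) := by
  refine ((integrable_cexp_quadratic_vertical hσ k a).norm.mul_prod
    (Real.GammaIntegral_convergent hk)).mono' (by fun_prop) ?_
  have hpos : ∀ᵐ p : ℝ × ℝ ∂volume.prod (volume.restrict (Ioi 0)), 0 < p.2 :=
    (Measure.ae_prod_iff_ae_ae (measurableSet_lt measurable_const measurable_snd)).mpr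
      (.of_forall fun _ => ae_restrict_mem measurableSet_Ioi)
  filter_upwards [hpos] with ⟨t, u⟩ hu
  rw [Function.uncurry_apply_pair, norm_mul, norm_mul, norm_cpow_eq_rpow_re_of_pos hu]
  simp only [norm_real, Real.norm_of_nonneg (Real.exp_pos _).le, sub_re, add_re, ofReal_re,
    mul_re, I_re, I_im, ofReal_im, one_re, mul_zero, zero_mul, sub_zero, add_zero]
  exact (mul_comm _ _).le

lemma mul_lognormalDensity_add_log_mul (μ σ : ℝ) {x y : ℝ} (hx : 0 < x) (hy : 0 < y) :
    x * lognormalDensity (μ + Real.log x) σ (x * y) = lognormalDensity μ σ y := by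
  rw [lognormalDensity, lognormalDensity, Real.log_mul hx.ne' hy.ne',
    show Real.log x + Real.log y - (μ + Real.log x) = Real.log y - μ by ring]
  field_simp

lemma setIntegral_cexp_neg_mul_lognormalDensity (μ σ : ℝ) {x : ℝ} (hx : 0 < x) :
    ∫ y : ℝ in Ioi 0, cexp (-x * y) * lognormalDensity μ σ y
      = ∫ u : ℝ in Ioi 0, cexp (-u) * lognormalDensity (μ + Real.log x) σ u := by
  calc ∫ y : ℝ in Ioi 0, cexp (-x * y) * lognormalDensity μ σ y
      = ∫ y : ℝ in Ioi 0, x • (cexp (-↑(x * y)) * lognormalDensity (μ + Real.log x) σ (x * y)) := by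
        refine setIntegral_congr_fun measurableSet_Ioi fun y hy => ?_
        rw [← mul_lognormalDensity_add_log_mul μ σ hx hy, real_smul]
        push_cast
        rw [neg_mul]
        ring
    _ = ∫ u : ℝ in Ioi 0, cexp (-u) * lognormalDensity (μ + Real.log x) σ u := by
        rw [integral_smul, integral_comp_mul_left_Ioi' (fun u : ℝ =>
          cexp (-u) * lognormalDensity (μ + Real.log x) σ u) 0 hx, mul_zero]

/-- For any k > 0 and z ∈ ℂ \ (-∞,0], the Mellin–Barnes integral
(1/(2πi)) ∫_{k-i∞}^{k+i∞} Γ(s) e^{-(μ+Log z)s + (σ²/2)s²} ds converges absolutely,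
and for real positive z it equals the lognormal Laplace transform. -/
theorem lognormal_mellinBarnes (μ σ k : ℝ) (hσ : 0 < σ) (hk : 0 < k) :
    (∀ z ∈ Complex.slitPlane, Integrable (mellinBarnesIntegrand μ σ k z)) ∧
    ∀ x : ℝ, 0 < x →
      (1 / (2 * Real.pi)) * ∫ t : ℝ, mellinBarnesIntegrand μ σ k (x : ℂ) t
        = ∫ y : ℝ in Ioi 0, Complex.exp (-(x:ℂ) * y) * (lognormalDensity μ σ y : ℂ) := by
  refine ⟨fun z _ => integrable_mellinBarnesIntegrand hσ hk μ z, fun x hx => ?_⟩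
  have hc : (μ : ℂ) + log x = ↑(μ + Real.log x) := by rw [ofReal_add, ofReal_log hx.le]
  calc (1 / (2 * Real.pi)) * ∫ t : ℝ, mellinBarnesIntegrand μ σ k x t
      = (1 / (2 * Real.pi)) * ∫ u : ℝ in Ioi 0, ∫ t : ℝ, ↑(Real.exp (-u))
          * ((u : ℂ) ^ (k + t * I - 1)
            * cexp (-↑(μ + Real.log x) * (k + t * I) + (σ : ℂ) ^ 2 / 2 * (k + t * I) ^ 2)) := by
        simp_rw [mellinBarnesIntegrand_eq_setIntegral μ σ hk,
          integral_integral_swap (integrable_gammaIntegrand_mul_cexp_quadratic_vertical hσ hk _),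
          hc, mul_assoc]
    _ = ∫ u : ℝ in Ioi 0, cexp (-u) * lognormalDensity (μ + Real.log x) σ u := by
        rw [← integral_const_mul]
        refine setIntegral_congr_fun measurableSet_Ioi fun u hu => ?_
        rw [integral_const_mul, integral_cpow_mul_cexp_quadratic_vertical hσ _ k hu]
        push_cast
        field_simp
    _ = _ := (setIntegral_cexp_neg_mul_lognormalDensity μ σ hx).symm
end

section
/- For σ > 0, k ∈ ℝ, m a nonnegative integer, and w ∈ ℂ, the contour integral (1/(2πi)) ∫_{k-i∞}^{k+i∞} s^m exp(ws + (σ²/2)s²) ds equals ((-1)^m /(√(2π) σ^{m+1})) e^{-w²/(2σ²)} H_m(w/σ), where H_m is the m-th probabilist's Hermite polynomial. -/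
/-!
Along `s = k + t i`, integrating by parts in `t` (the integrand has Gaussian decay) turns
`d/ds (s^m e^{ws + σ²s²/2}) = (m s^{m-1} + w s^m + σ² s^{m+1}) e^{ws + σ²s²/2}` into the
three-term recurrence `m I_{m-1} + w I_m + σ² I_{m+1} = 0` for the integrals `I_m`.
The sequence `(-1)^m σ^{-m} He_m(w/σ)` satisfies the same recurrence, because
`He_{m+1}(x) = x He_m(x) - m He_{m-1}(x)`; a solution is determined by its value at `m = 0`,
and `I_0` is a Gaussian integral.
-/

open MeasureTheory Complex Real Filter Asymptotics Topology Polynomial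

namespace Polynomial

theorem derivative_hermite_succ (n : ℕ) :
    derivative (hermite (n + 1)) = (n + 1 : ℤ[X]) * hermite n := by
  induction n with
  | zero => simp
  | succ n ih =>
    rw [hermite_succ (n + 1), derivative_sub, derivative_mul, derivative_X, ih, derivative_mul,
      derivative_add, derivative_natCast, derivative_one, hermite_succ n]
    push_cast
    ring

theorem derivative_hermite (n : ℕ) : derivative (hermite n) = n * hermite (n - 1) := by
  rcases n with _ | n
  · simp
  · simpa using derivative_hermite_succ n

theorem aeval_hermite_succ {R : Type*} [CommRing R] (x : R) (n : ℕ) :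
    aeval x (hermite (n + 1)) = x * aeval x (hermite n) - n * aeval x (hermite (n - 1)) := by
  simp [hermite_succ, derivative_hermite]

end Polynomial

theorem hermite_scaled_recurrence {K : Type*} [Field K] {σ : K} (hσ : σ ≠ 0) (w : K) (j : ℕ) :
    j * ((-1) ^ (j - 1) / σ ^ (j - 1) * aeval (w / σ) (hermite (j - 1)))
      + w * ((-1) ^ j / σ ^ j * aeval (w / σ) (hermite j))
      + σ ^ 2 * ((-1) ^ (j + 1) / σ ^ (j + 1) * aeval (w / σ) (hermite (j + 1))) = 0 := by
  rw [aeval_hermite_succ]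
  rcases j with _ | j
  · field_simp; ring
  · simp only [Nat.add_sub_cancel]
    field_simp
    ring

theorem eq_of_three_term_recurrence {K : Type*} [Field K] {b c : K} (hc : c ≠ 0) {u v : ℕ → K}
    (hu : ∀ j : ℕ, (j : K) * u (j - 1) + b * u j + c * u (j + 1) = 0)
    (hv : ∀ j : ℕ, (j : K) * v (j - 1) + b * v j + c * v (j + 1) = 0) (h0 : u 0 = v 0) :
    u = v := by
  have key : ∀ j, u j = v j ∧ u (j + 1) = v (j + 1) := by
    intro j
    induction j with
    | zero =>
      refine ⟨h0, mul_left_cancel₀ hc ?_⟩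
      linear_combination hu 0 - hv 0 - b * h0
    | succ j ih =>
      refine ⟨ih.2, mul_left_cancel₀ hc ?_⟩
      have hu' := hu (j + 1)
      have hv' := hv (j + 1)
      simp only [Nat.add_sub_cancel] at hu' hv'
      linear_combination hu' - hv' - ((j + 1 : ℕ) : K) * ih.1 - b * ih.2
  exact funext fun j => (key j).1

theorem tendsto_pow_mul_cexp_quadratic_cocompact {b : ℂ} (hb : b.re < 0) (c : ℂ) (k : ℝ)
    (m : ℕ) :
    Tendsto (fun t : ℝ => ((k : ℂ) + t * I) ^ m * cexp (b * t ^ 2 + c * t)) (cocompact ℝ)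
      (𝓝 0) := by
  have h_one_le : ∀ᶠ t : ℝ in cocompact ℝ, 1 ≤ |t| :=
    (tendsto_norm_cocompact_atTop.eventually_ge_atTop 1)
  have h_line : (fun t : ℝ => (k : ℂ) + t * I) =O[cocompact ℝ] (fun t : ℝ => t) := by
    refine IsBigO.add ?_ ?_
    · refine IsBigO.of_bound |k| ?_
      filter_upwards [h_one_le] with t ht
      simpa using le_mul_of_one_le_right (abs_nonneg k) ht
    · exact IsBigO.of_bound 1 (.of_forall fun t => by simp)
  have h_prod := (h_line.pow m).mul_isLittleO
    (cexp_neg_quadratic_isLittleO_abs_rpow_cocompact hb c (-m))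
  rw [← isLittleO_one_iff ℝ]
  refine h_prod.trans_isBigO (IsBigO.of_bound 1 ?_)
  filter_upwards [h_one_le] with t ht
  rw [Real.rpow_neg (abs_nonneg t), Real.rpow_natCast, norm_mul, norm_pow, norm_inv, norm_pow,
    Real.norm_eq_abs, Real.norm_eq_abs, abs_abs, mul_inv_cancel₀ (by positivity)]
  simp

noncomputable def gaussLineIntegrand (a w : ℂ) (k : ℝ) (m : ℕ) (t : ℝ) : ℂ :=
  ((k : ℂ) + t * I) ^ m * cexp (w * (k + t * I) + a * (k + t * I) ^ 2)

section GaussLineIntegrand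

variable {a : ℂ} (w : ℂ) (k : ℝ)

theorem exponent_on_vertical_line (t : ℝ) :
    w * (k + t * I) + a * (k + t * I) ^ 2 =
      -a * t ^ 2 + I * (w + 2 * a * k) * t + (w * k + a * k ^ 2) := by
  linear_combination a * t ^ 2 * I_sq

theorem integrable_gaussLineIntegrand (ha : 0 < a.re) (m : ℕ) :
    Integrable (gaussLineIntegrand a w k m) := by
  have h_cont : Continuous (gaussLineIntegrand a w k m) := by
    unfold gaussLineIntegrand; fun_prop
  -- Half of the Gaussian decay absorbs the polynomial factor, the other half is integrable.
  have h_split : gaussLineIntegrand a w k m = fun t : ℝ => cexp (w * k + a * k ^ 2) *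
      (((k : ℂ) + t * I) ^ m * cexp (-(a / 2) * t ^ 2 + I * (w + 2 * a * k) * t)) *
        cexp (-(a / 2) * t ^ 2) := by
    ext t
    rw [gaussLineIntegrand, exponent_on_vertical_line, show -a * t ^ 2 + I * (w + 2 * a * k) * t
      + (w * k + a * k ^ 2) = (w * k + a * k ^ 2) + (-(a / 2) * t ^ 2 + I * (w + 2 * a * k) * t)
      + -(a / 2) * t ^ 2 by ring, Complex.exp_add, Complex.exp_add]
    ring
  have h_small := (tendsto_pow_mul_cexp_quadratic_cocompact (b := -(a / 2)) (by simpa using ha)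
    (I * (w + 2 * a * k)) k m).isBigO_one ℂ
  refine h_cont.locallyIntegrable.integrable_of_isBigO_cocompact
    (g := fun t : ℝ => cexp (-(a / 2) * t ^ 2)) ?_
    ((integrable_cexp_neg_mul_sq (by simpa using ha)).integrableAtFilter _)
  rw [h_split]
  simpa using ((h_small.const_mul_left _).mul (isBigO_refl _ _))

theorem hasDerivAt_gaussLineIntegrand (m : ℕ) (t : ℝ) :
    HasDerivAt (gaussLineIntegrand a w k m)
      (I * (m * gaussLineIntegrand a w k (m - 1) t + w * gaussLineIntegrand a w k m t
        + 2 * a * gaussLineIntegrand a w k (m + 1) t)) t := by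
  have h_line : HasDerivAt (fun z : ℂ => (k : ℂ) + z * I) I t := by
    simpa using ((hasDerivAt_id (t : ℂ)).mul_const I).const_add (k : ℂ)
  have h_exponent : HasDerivAt (fun z : ℂ => w * (k + z * I) + a * (k + z * I) ^ 2)
      ((w + 2 * a * (k + t * I)) * I) t :=
    ((h_line.const_mul w).add ((h_line.pow 2).const_mul a)).congr_deriv (by push_cast; ring)
  refine ((h_line.pow m).mul h_exponent.cexp).comp_ofReal.congr_deriv ?_
  unfold gaussLineIntegrand
  rcases m with _ | m
  · simp only [Pi.pow_apply, pow_zero, CharP.cast_eq_zero]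
    ring
  · simp only [Pi.pow_apply, Nat.add_sub_cancel]
    ring

theorem gaussLineIntegral_recurrence (ha : 0 < a.re) (m : ℕ) :
    m * (∫ t, gaussLineIntegrand a w k (m - 1) t) + w * (∫ t, gaussLineIntegrand a w k m t)
      + 2 * a * (∫ t, gaussLineIntegrand a w k (m + 1) t) = 0 := by
  have h_int (j : ℕ) := integrable_gaussLineIntegrand w k ha j
  have h_sum_int : Integrable fun t => m * gaussLineIntegrand a w k (m - 1) t
      + w * gaussLineIntegrand a w k m t + 2 * a * gaussLineIntegrand a w k (m + 1) t :=
    (((h_int _).const_mul _).add ((h_int _).const_mul _)).add ((h_int _).const_mul _)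
  have h_zero := integral_eq_zero_of_hasDerivAt_of_integrable
    (hasDerivAt_gaussLineIntegrand w k m) (h_sum_int.const_mul I) (h_int m)
  rw [integral_const_mul, integral_add, integral_add, integral_const_mul, integral_const_mul,
    integral_const_mul] at h_zero
  · exact (mul_eq_zero.mp h_zero).resolve_left I_ne_zero
  all_goals first
    | exact (h_int _).const_mul _
    | exact ((h_int _).const_mul _).add ((h_int _).const_mul _)

theorem integral_gaussLineIntegrand_zero (ha : 0 < a.re) :
    ∫ t, gaussLineIntegrand a w k 0 t = (π / a) ^ (1 / 2 : ℂ) * cexp (-w ^ 2 / (4 * a)) := by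
  have ha0 : a ≠ 0 := by rintro rfl; simp at ha
  simp_rw [gaussLineIntegrand, pow_zero, one_mul, exponent_on_vertical_line]
  rw [integral_cexp_quadratic (by simpa using ha), neg_neg]
  congr 2
  field_simp
  linear_combination (w + 2 * a * k) ^ 2 * I_sq

end GaussLineIntegrand

theorem pi_div_half_sq_cpow_half {σ : ℝ} (hσ : 0 < σ) :
    ((π : ℂ) / ((σ : ℂ) ^ 2 / 2)) ^ (1 / 2 : ℂ) = (√(2 * π) / σ : ℝ) := by
  rw [show (π : ℂ) / ((σ : ℂ) ^ 2 / 2) = (2 * π / σ ^ 2 : ℝ) by push_cast; ring,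
    show (1 / 2 : ℂ) = (1 / 2 : ℝ) by norm_num, ← ofReal_cpow (by positivity), ← Real.sqrt_eq_rpow,
    Real.sqrt_div' _ (by positivity), Real.sqrt_sq hσ.le]

/-- For σ > 0, k ∈ ℝ, m ∈ ℕ ∪ {0}, and w ∈ ℂ, the contour integral
(1/(2πi)) ∫_{k-i∞}^{k+i∞} s^m exp(ws + (σ²/2)s²) ds equals
((-1)^m/(√(2π) σ^{m+1})) e^{-w²/(2σ²)} H_m(w/σ), with H_m the m-th
probabilist's Hermite polynomial. -/
theorem contour_integral_hermite (σ : ℝ) (hσ : 0 < σ) (k : ℝ) (m : ℕ) (w : ℂ) :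
    (1 / (2 * Real.pi)) * ∫ t : ℝ,
        (k + t * Complex.I)^m *
          Complex.exp (w * (k + t * Complex.I) + (σ:ℂ)^2 / 2 * (k + t * Complex.I)^2)
      = ((-1)^m / (Real.sqrt (2 * Real.pi) * (σ:ℂ)^(m+1))) *
          Complex.exp (-w^2 / (2 * σ^2)) *
          Polynomial.aeval (w / (σ:ℂ)) (Polynomial.hermite m) := by
  have hσ0 : (σ : ℂ) ≠ 0 := ofReal_ne_zero.2 hσ.ne'
  have ha : 0 < ((σ : ℂ) ^ 2 / 2).re := by
    rw [← ofReal_pow, ← ofReal_ofNat, ← ofReal_div, ofReal_re]; positivity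
  set C : ℂ := (√(2 * π) / σ : ℝ) * cexp (-w ^ 2 / (2 * σ ^ 2))
  have h_integrals : (fun j => ∫ t, gaussLineIntegrand ((σ : ℂ) ^ 2 / 2) w k j t) =
      fun j => C * ((-1) ^ j / σ ^ j * aeval (w / σ) (hermite j)) := by
    refine eq_of_three_term_recurrence (pow_ne_zero 2 hσ0) (b := w) (fun j => ?_) (fun j => ?_) ?_
    · linear_combination gaussLineIntegral_recurrence w k ha j
    · linear_combination C * hermite_scaled_recurrence hσ0 w j
    · rw [integral_gaussLineIntegrand_zero w k ha, pi_div_half_sq_cpow_half hσ,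
        show (4 : ℂ) * (σ ^ 2 / 2) = 2 * σ ^ 2 by ring]
      simp [C]
  show _ * ∫ t, gaussLineIntegrand ((σ : ℂ) ^ 2 / 2) w k m t = _
  have h_sqrt : ((√(2 * π) : ℝ) : ℂ) ^ 2 = 2 * π := by
    rw [← ofReal_pow, Real.sq_sqrt (by positivity)]; push_cast; ring
  rw [congrFun h_integrals m]
  simp only [C]
  push_cast
  field_simp
  linear_combination aeval (w / σ) (hermite m) * σ * σ ^ m * h_sqrt
end

section
/- For |s| < N+1 (N a natural number), the function γ_N(s) := Γ(s) − Σ_{n=0}^N ((-1)^n/n!) · 1/(s+n) extends to a holomorphic function on the disc {s : |s| < N+1}, and its Taylor coefficients at 0 are a_m = Γ^{(m+1)}(1)/(m+1)! + (-1)^{m+1} Σ_{j=1}^N ((-1)^j/j!) j^{-(m+1)}. -/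
open Complex Set Metric Finset Topology

/-! Write `T f` for `dslope (f (· + 1)) 0`, i.e. `(f (s + 1) - f 1) / s` extended by `f' 1`
at `0`. Since `Γ (s + 1) = s Γ(s)` and `Γ 1 = 1`, the iterate `T^[N+1] Γ` agrees with
`Γ(s) - ∑_{n ≤ N} (-1)ⁿ/n! (s + n)⁻¹` away from the poles, while each application of `T` moves
the half-plane of holomorphy `-k < Re s` one unit to the left. Near `0`, the identity theorem
identifies `T^[N+1] Γ` with `T Γ(z) - ∑_{j=1}^N (-1)ʲ/j! (z + j)⁻¹`; the Taylor coefficients of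
`T Γ` are those of `Γ` at `1` shifted by one, and those of `(z + j)⁻¹` are `(-1)^m j^{-(m+1)}`. -/

noncomputable def shiftDslope (f : ℂ → ℂ) : ℂ → ℂ :=
  dslope (fun s => f (s + 1)) 0

noncomputable def gammaPolePart (N : ℕ) (s : ℂ) : ℂ :=
  ∑ n ∈ range N, (-1) ^ n / (n.factorial : ℂ) * (s + n)⁻¹

lemma shiftDslope_apply_of_ne_zero (f : ℂ → ℂ) {s : ℂ} (hs : s ≠ 0) :
    shiftDslope f s = (f (s + 1) - f 1) / s := by
  rw [shiftDslope, dslope_of_ne _ hs, slope_def_field, zero_add, sub_zero]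

lemma DifferentiableOn.shiftDslope {f : ℂ → ℂ} {a : ℝ} (ha : a < 1)
    (hf : DifferentiableOn ℂ f {s | a < s.re}) :
    DifferentiableOn ℂ (shiftDslope f) {s | a - 1 < s.re} := by
  have hopen : IsOpen {s : ℂ | a - 1 < s.re} := isOpen_lt continuous_const continuous_re
  refine (Complex.differentiableOn_dslope (hopen.mem_nhds (by simpa using ha))).2 ?_
  refine hf.comp (differentiableOn_id.add_const 1) fun s hs => ?_
  simp only [mem_ofPred_eq, add_re, one_re] at hs ⊢
  linarith

lemma differentiableOn_Gamma_re_pos : DifferentiableOn ℂ Gamma {s | 0 < s.re} := by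
  intro s hs
  refine (differentiableAt_Gamma s fun m hm => ?_).differentiableWithinAt
  have : s.re = -m := by simp [hm]
  simp only [mem_ofPred_eq] at hs
  linarith [(m.cast_nonneg : (0:ℝ) ≤ m)]

lemma differentiableOn_iterate_shiftDslope_Gamma (N : ℕ) :
    DifferentiableOn ℂ (shiftDslope^[N] Gamma) {s | -(N : ℝ) < s.re} := by
  induction N with
  | zero => simpa using differentiableOn_Gamma_re_pos
  | succ N ih =>
    rw [Function.iterate_succ_apply', Nat.cast_succ, neg_add']
    exact ih.shiftDslope (by linarith [(N.cast_nonneg : (0:ℝ) ≤ N)])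

lemma gammaPolePart_add_one_sub_gammaPolePart_one (N : ℕ) (s : ℂ)
    (hs : ∀ n < N, s + (n + 1) ≠ 0) :
    gammaPolePart N (s + 1) - gammaPolePart N 1
      = s * ∑ n ∈ range N, (-1) ^ (n + 1) / ((n + 1).factorial : ℂ) * (s + (n + 1 : ℕ))⁻¹ := by
  rw [gammaPolePart, gammaPolePart, ← sum_sub_distrib, mul_sum]
  refine sum_congr rfl fun n hn => ?_
  have h1 := hs n (mem_range.1 hn)
  have h2 : (n : ℂ) + 1 ≠ 0 := by exact_mod_cast n.succ_ne_zero
  rw [Nat.factorial_succ, show s + 1 + n = s + (n + 1) by ring,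
    show (1 : ℂ) + n = n + 1 by ring]
  push_cast
  field_simp
  ring

lemma Gamma_sub_gammaPolePart_succ (N : ℕ) {s : ℂ} (hs₀ : s ≠ 0)
    (hs : ∀ n < N, s + (n + 1) ≠ 0) :
    Gamma s - gammaPolePart (N + 1) s
      = ((Gamma (s + 1) - gammaPolePart N (s + 1)) - (Gamma 1 - gammaPolePart N 1)) / s := by
  rw [sub_sub_sub_comm, gammaPolePart_add_one_sub_gammaPolePart_one N s hs, Gamma_add_one s hs₀,
    Gamma_one, gammaPolePart, sum_range_succ', eq_div_iff hs₀]
  simp only [pow_zero, Nat.factorial_zero, Nat.cast_one, div_one, Nat.cast_zero, add_zero, one_mul]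
  rw [sub_mul, add_mul, inv_mul_cancel₀ hs₀]
  push_cast
  ring

lemma iterate_shiftDslope_Gamma_eq (N : ℕ) {s : ℂ} (hs : ∀ n < N, s + n ≠ 0) :
    (shiftDslope^[N] Gamma) s = Gamma s - gammaPolePart N s := by
  induction N generalizing s with
  | zero => simp [gammaPolePart]
  | succ N ih =>
    have hs₀ : s ≠ 0 := by simpa using hs 0 N.succ_pos
    have hs₁ : ∀ n < N, s + (n + 1) ≠ 0 := fun n hn => by
      simpa using hs (n + 1) (Nat.succ_lt_succ hn)
    rw [Function.iterate_succ_apply', shiftDslope_apply_of_ne_zero _ hs₀,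
      Gamma_sub_gammaPolePart_succ N hs₀ hs₁, ih, ih]
    · intro n _; norm_cast; omega
    · intro n hn; rw [add_assoc, add_comm 1]; exact hs₁ n hn

lemma analyticAt_iterate_shiftDslope_Gamma_zero (N : ℕ) :
    AnalyticAt ℂ (shiftDslope^[N + 1] Gamma) 0 :=
  (differentiableOn_iterate_shiftDslope_Gamma (N + 1)).analyticAt
    ((isOpen_lt continuous_const continuous_re).mem_nhds
      (by simp; linarith [N.cast_nonneg (α := ℝ)]))

lemma AnalyticAt.iteratedDeriv_dslope_div_factorial {𝕜 : Type*} [NontriviallyNormedField 𝕜]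
    [CompleteSpace 𝕜] [CharZero 𝕜] {f : 𝕜 → 𝕜} {a : 𝕜} (hf : AnalyticAt 𝕜 f a) (m : ℕ) :
    iteratedDeriv m (dslope f a) a / m.factorial
      = iteratedDeriv (m + 1) f a / (m + 1).factorial := by
  have hslope := hf.hasFPowerSeriesAt.has_fpower_series_dslope_fslope
  have hcoeff := congrArg (·.coeff m)
    (hslope.analyticAt.hasFPowerSeriesAt.eq_formalMultilinearSeries hslope)
  simpa [FormalMultilinearSeries.coeff_fslope] using hcoeff

lemma iteratedDeriv_inv_add_const {𝕜 : Type*} [NontriviallyNormedField 𝕜] (m : ℕ) (c x : 𝕜) :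
    iteratedDeriv m (fun z => (z + c)⁻¹) x = (-1) ^ m * m.factorial * ((x + c) ^ (m + 1))⁻¹ := by
  have h := congrFun (iter_deriv_inv_linear m 1 c) x
  simp only [one_mul, one_pow, mul_one] at h
  rw [iteratedDeriv_eq_iterate, h, show (-1 - m : ℤ) = -((m + 1 : ℕ) : ℤ) by push_cast; ring,
    zpow_neg, zpow_natCast]

lemma analyticAt_zero_inv_add_natCast {j : ℕ} (hj : j ≠ 0) :
    AnalyticAt ℂ (fun z : ℂ => (z + j)⁻¹) 0 :=
  (analyticAt_id.add analyticAt_const).inv (by simpa using hj)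

lemma iterate_shiftDslope_Gamma_eventuallyEq (N : ℕ) :
    shiftDslope^[N + 1] Gamma =ᶠ[𝓝 0]
      fun z => shiftDslope Gamma z - ∑ j ∈ Icc 1 N, (-1) ^ j / (j.factorial : ℂ) * (z + j)⁻¹ := by
  have hinv : AnalyticAt ℂ
      (fun z : ℂ => ∑ j ∈ Icc 1 N, (-1) ^ j / (j.factorial : ℂ) * (z + j)⁻¹) 0 :=
    Finset.analyticAt_fun_sum _ fun j hj => analyticAt_const.mul <|
      analyticAt_zero_inv_add_natCast (Nat.one_le_iff_ne_zero.1 (Finset.mem_Icc.1 hj).1)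
  have hΓ : AnalyticAt ℂ (shiftDslope Gamma) 0 := by
    simpa using analyticAt_iterate_shiftDslope_Gamma_zero 0
  refine ((analyticAt_iterate_shiftDslope_Gamma_zero N).frequently_eq_iff_eventually_eq
    (hΓ.fun_sub hinv)).1 (Filter.Eventually.frequently ?_)
  filter_upwards [self_mem_nhdsWithin, nhdsWithin_le_nhds (ball_mem_nhds (0 : ℂ) one_pos)]
    with z hz₀ hz₁
  have hpoles : ∀ n : ℕ, z + n ≠ 0 := by
    rintro (_ | n) h
    · simp_all
    · have := mem_ball_zero_iff.1 hz₁
      rw [eq_neg_of_add_eq_zero_left h, norm_neg, Complex.norm_natCast] at this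
      push_cast at this
      linarith [(n.cast_nonneg : (0:ℝ) ≤ n)]
  have hone := iterate_shiftDslope_Gamma_eq 1 fun n _ => hpoles n
  rw [Function.iterate_one] at hone
  rw [iterate_shiftDslope_Gamma_eq _ fun n _ => hpoles n, hone, gammaPolePart, gammaPolePart,
    ← sum_range_add_sum_Ico _ (Nat.le_add_left 1 N), Finset.Ico_add_one_right_eq_Icc, sub_sub]

lemma iteratedDeriv_shiftDslope_Gamma_sub_div_factorial (N m : ℕ) :
    iteratedDeriv m
        (fun z => shiftDslope Gamma z - ∑ j ∈ Icc 1 N, (-1) ^ j / (j.factorial : ℂ) * (z + j)⁻¹) 0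
        / m.factorial
      = iteratedDeriv (m + 1) Gamma 1 / ((m + 1).factorial : ℂ)
        + (-1) ^ (m + 1)
          * ∑ j ∈ Icc 1 N, ((-1) ^ j / (j.factorial : ℂ)) * ((j : ℂ) ^ (m + 1))⁻¹ := by
  have hΓ : AnalyticAt ℂ (fun s => Gamma (s + 1)) 0 := by
    have := differentiableOn_Gamma_re_pos.analyticAt
      ((isOpen_lt continuous_const continuous_re).mem_nhds
        (by simp : (1 : ℂ) ∈ {s : ℂ | 0 < s.re}))
    exact this.comp_of_eq (analyticAt_id.add analyticAt_const) (zero_add 1)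
  have hterm : ∀ j ∈ Finset.Icc 1 N,
      AnalyticAt ℂ (fun z : ℂ => (-1) ^ j / (j.factorial : ℂ) * (z + j)⁻¹) 0 := fun j hj =>
    analyticAt_const.mul <|
      analyticAt_zero_inv_add_natCast (Nat.one_le_iff_ne_zero.1 (Finset.mem_Icc.1 hj).1)
  have hΓ' : AnalyticAt ℂ (shiftDslope Gamma) 0 := by
    simpa using analyticAt_iterate_shiftDslope_Gamma_zero 0
  rw [iteratedDeriv_fun_sub hΓ'.contDiffAt (Finset.analyticAt_fun_sum _ hterm).contDiffAt,
    iteratedDeriv_fun_sum fun j hj => (hterm j hj).contDiffAt, sub_div, shiftDslope,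
    hΓ.iteratedDeriv_dslope_div_factorial, iteratedDeriv_comp_add_const]
  beta_reduce
  rw [zero_add, sub_eq_add_neg, sum_div, mul_sum, ← sum_neg_distrib]
  congr 1
  refine sum_congr rfl fun j _ => ?_
  have hm : (m.factorial : ℂ) ≠ 0 := by exact_mod_cast m.factorial_ne_zero
  rw [iteratedDeriv_const_mul_field, iteratedDeriv_inv_add_const, zero_add]
  field_simp
  ring

lemma ball_zero_subset_neg_lt_re (r : ℝ) : ball (0 : ℂ) r ⊆ {s | -r < s.re} := fun s hs => by
  have := mem_ball_zero_iff.1 hs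
  simp only [mem_ofPred_eq]
  linarith [neg_abs_le s.re, abs_re_le_norm s]

/-- γ_N(s) := Γ(s) − Σ_{n=0}^N ((-1)^n/n!) (s+n)⁻¹ extends to a holomorphic
function on the disc |s| < N+1, whose Taylor coefficients at 0 are
a_m = Γ^{(m+1)}(1)/(m+1)! + (-1)^{m+1} Σ_{j=1}^N ((-1)^j/j!) j^{-(m+1)}. -/
theorem gammaN_holomorphic_taylor (N : ℕ) :
    ∃ g : ℂ → ℂ,
      DifferentiableOn ℂ g (ball (0:ℂ) (N + 1)) ∧
      (∀ s ∈ ball (0:ℂ) (N + 1), (∀ n : ℕ, n ≤ N → s ≠ -(n:ℂ)) →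
        g s = Complex.Gamma s -
          ∑ n ∈ Finset.range (N + 1), ((-1)^n / (n.factorial : ℂ)) * (s + n)⁻¹) ∧
      ∀ m : ℕ,
        iteratedDeriv m g 0 / (m.factorial : ℂ)
          = iteratedDeriv (m + 1) Complex.Gamma 1 / ((m + 1).factorial : ℂ)
            + (-1)^(m + 1) * ∑ j ∈ Finset.Icc 1 N,
                ((-1)^j / (j.factorial : ℂ)) * ((j:ℂ)^(m + 1))⁻¹ := by
  refine ⟨shiftDslope^[N + 1] Gamma, ?_, fun s _ hs => ?_, fun m => ?_⟩
  · refine (differentiableOn_iterate_shiftDslope_Gamma (N + 1)).mono ?_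
    exact_mod_cast ball_zero_subset_neg_lt_re (N + 1)
  · exact iterate_shiftDslope_Gamma_eq (N + 1) fun n hn h =>
      hs n (Nat.lt_succ_iff.1 hn) (eq_neg_of_add_eq_zero_left h)
  · rw [(iterate_shiftDslope_Gamma_eventuallyEq N).iteratedDeriv_eq]
    exact iteratedDeriv_shiftDslope_Gamma_sub_div_factorial N m
end
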